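/- arXiv:1302.2742 — 2 statements merged into one kernel-verified Lean document; each statement's English description precedes it below -/
import Mathlib

section
/- Fix an integer n ≥ 1. As M → ∞ through the positive integers, the integral over x from 0 to 1 of (1/x) · (1 - (1-x)^M) · (1-x)^{n-1} dx is asymptotic to log M; that is, the ratio of this integral to log M converges to 1. -/
open Filter Topology intervalIntegral

/-! Expanding `(1 - (1 - x) ^ M) / x` as a geometric sum in `1 - x` and integrating term by term
turns the integral into the tail `H (M + m) - H m` of the harmonic series, where `m = n - 1`.
Since `H N - log N → γ` and `log (M + m) - log M → 0`, the integral differs from `log M` by a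
convergent quantity, so its ratio to `log M` tends to `1`. -/

theorem Filter.Tendsto.div_tendsto_one_of_sub {α : Type*} {l : Filter α} {f g : α → ℝ} {c : ℝ}
    (hg : Tendsto g l atTop) (hfg : Tendsto (fun a => f a - g a) l (𝓝 c)) :
    Tendsto (fun a => f a / g a) l (𝓝 1) := by
  have hquot : Tendsto (fun a => (f a - g a) / g a + 1) l (𝓝 (0 + 1)) :=
    (hfg.div_atTop hg).add_const 1
  rw [zero_add] at hquot
  refine hquot.congr' ?_
  filter_upwards [hg.eventually_gt_atTop 0] with a ha
  field_simp
  ring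

theorem tendsto_harmonic_add_sub_log (m : ℕ) :
    Tendsto (fun M : ℕ => (harmonic (M + m) : ℝ) - Real.log M) atTop
      (𝓝 Real.eulerMascheroniConstant) := by
  have hH := Real.tendsto_harmonic_sub_log.comp (tendsto_add_atTop_nat m)
  have hlog := (Real.tendsto_log_comp_add_sub_log m).comp tendsto_natCast_atTop_atTop
  rw [← add_zero Real.eulerMascheroniConstant]
  refine (hH.add hlog).congr fun M => ?_
  simp only [Function.comp_apply, Nat.cast_add]
  ring

theorem integral_one_sub_pow (k : ℕ) : ∫ x in (0:ℝ)..1, (1 - x) ^ k = 1 / (k + 1) := by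
  simp [integral_comp_sub_left (fun x : ℝ => x ^ k)]

theorem one_div_mul_one_sub_one_sub_pow {x : ℝ} (hx : x ≠ 0) (M : ℕ) :
    1 / x * (1 - (1 - x) ^ M) = ∑ i ∈ Finset.range M, (1 - x) ^ i := by
  rw [← geom_sum_mul_neg, sub_sub_cancel]
  field_simp

theorem harmonic_add (m M : ℕ) :
    (harmonic (m + M) : ℝ) = harmonic m + ∑ i ∈ Finset.range M, 1 / ((i + m : ℕ) + 1 : ℝ) := by
  simp only [harmonic, Finset.sum_range_add]
  push_cast
  ring_nf

theorem integral_one_div_mul_one_sub_one_sub_pow_mul_pow (M m : ℕ) :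
    ∫ x in (0:ℝ)..1, 1 / x * (1 - (1 - x) ^ M) * (1 - x) ^ m
      = harmonic (M + m) - harmonic m := by
  have hgeom : ∫ x in (0:ℝ)..1, 1 / x * (1 - (1 - x) ^ M) * (1 - x) ^ m
      = ∫ x in (0:ℝ)..1, ∑ i ∈ Finset.range M, (1 - x) ^ (i + m) := by
    refine integral_congr_ae (Eventually.of_forall fun x hx => ?_)
    rw [Set.uIoc_of_le zero_le_one] at hx
    simp only [one_div_mul_one_sub_one_sub_pow hx.1.ne', Finset.sum_mul, pow_add]
  have hint (i : ℕ) :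
      IntervalIntegrable (fun x : ℝ => (1 - x) ^ (i + m)) MeasureTheory.volume 0 1 :=
    (by fun_prop : Continuous fun x : ℝ => (1 - x) ^ (i + m)).intervalIntegrable 0 1
  rw [hgeom, integral_finsetSum fun i _ => hint i, add_comm M, harmonic_add]
  simp [integral_one_sub_pow]

theorem integral_singleton_term_asymptotic_general (n : ℕ) :
    Tendsto
      (fun M : ℕ =>
        (∫ x in (0:ℝ)..1, (1 / x) * (1 - (1 - x) ^ M) * (1 - x) ^ (n - 1)) / Real.log M)
      atTop (nhds 1) := by
  have hlog : Tendsto (fun M : ℕ => Real.log M) atTop atTop :=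
    Real.tendsto_log_atTop.comp tendsto_natCast_atTop_atTop
  refine hlog.div_tendsto_one_of_sub (c := Real.eulerMascheroniConstant - harmonic (n - 1)) ?_
  simp_rw [integral_one_div_mul_one_sub_one_sub_pow_mul_pow]
  refine ((tendsto_harmonic_add_sub_log (n - 1)).sub_const (harmonic (n - 1) : ℝ)).congr
    fun M => ?_
  ring

/-- For fixed `n ≥ 1`, as `M → ∞` through the positive integers, the integral over `x` from
0 to 1 of `(1/x)(1 - (1-x)^M)(1-x)^(n-1)` is asymptotic to `log M`. -/
theorem integral_singleton_term_asymptotic (n : ℕ) (hn : 1 ≤ n) :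
    Tendsto
      (fun M : ℕ =>
        (∫ x in (0:ℝ)..1, (1 / x) * (1 - (1 - x) ^ M) * (1 - x) ^ (n - 1)) / Real.log M)
      atTop (nhds 1) :=
  integral_singleton_term_asymptotic_general n
end

section
/- For real numbers γ > 0 and c with 0 < c ≤ 1, the integral over t from 0 to ∞ of exp(-c(e^{γ t} - 1)) dt is at least (1/γ)(log(1/c) - 1). -/
/-!
Since `e^{-x} ≥ 1 - x` and the integrand is positive, the integral over `(0, ∞)` is at least
`∫_0^T (1 - c(e^{γt} - 1)) dt = (1 + c)T - c(e^{γT} - 1)/γ` for any `T ≥ 0`. At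
`T = log(1/c)/γ`, where `c e^{γT} = 1`, this equals `(1 + c)T - (1 - c)/γ ≥ T - 1/γ`.
-/

open Real MeasureTheory Set

theorem integral_exp_mul {γ : ℝ} (hγ : γ ≠ 0) (a b : ℝ) :
    ∫ t in a..b, exp (γ * t) = (exp (γ * b) - exp (γ * a)) / γ := by
  rw [intervalIntegral.integral_comp_mul_left (fun x => exp x) hγ, integral_exp, smul_eq_mul,
    inv_mul_eq_div]

theorem integral_one_sub_mul_exp_sub_one {γ : ℝ} (hγ : γ ≠ 0) (c T : ℝ) :
    ∫ t in (0:ℝ)..T, (1 - c * (exp (γ * t) - 1)) = (1 + c) * T - c * (exp (γ * T) - 1) / γ := by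
  have hexp : IntervalIntegrable (fun t => exp (γ * t)) volume 0 T :=
    Continuous.intervalIntegrable (by fun_prop) 0 T
  simp only [mul_sub, mul_one, sub_sub_eq_add_sub]
  rw [intervalIntegral.integral_sub intervalIntegrable_const (hexp.const_mul c),
    intervalIntegral.integral_const, intervalIntegral.integral_const_mul, integral_exp_mul hγ,
    mul_zero, exp_zero, smul_eq_mul]
  ring

theorem integrableOn_exp_neg_mul_exp_sub_one {γ c : ℝ} (hγ : 0 < γ) (hc : 0 < c) (a : ℝ) :
    IntegrableOn (fun t => exp (-c * (exp (γ * t) - 1))) (Ioi a) := by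
  refine (exp_neg_integrableOn_Ioi a (mul_pos hc hγ)).mono'
    (Continuous.aestronglyMeasurable (by fun_prop)) (Filter.Eventually.of_forall fun t => ?_)
  -- `e^{γt} - 1 ≥ γt` turns the double exponential into an exponential decay
  rw [norm_of_nonneg (exp_pos _).le, exp_le_exp]
  nlinarith [add_one_le_exp (γ * t)]

/-- For `γ > 0` and `0 < c ≤ 1`,
`∫_0^∞ exp(-c(e^{γt} - 1)) dt ≥ (1/γ)(log(1/c) - 1)`. -/
theorem integral_coalescent_survival_lower_bound (γ c : ℝ) (hγ : 0 < γ) (hc : 0 < c)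
    (hc1 : c ≤ 1) :
    (1 / γ) * (Real.log (1 / c) - 1) ≤
      ∫ t in Set.Ioi (0:ℝ), Real.exp (-c * (Real.exp (γ * t) - 1)) := by
  set T := log (1 / c) / γ
  have hlog : 0 ≤ log (1 / c) := log_nonneg (one_le_one_div hc hc1)
  have hT : 0 ≤ T := div_nonneg hlog hγ.le
  have hexpT : exp (γ * T) = 1 / c := by
    rw [mul_div_cancel₀ _ hγ.ne', exp_log (one_div_pos.mpr hc)]
  have hf := integrableOn_exp_neg_mul_exp_sub_one hγ hc 0
  calc (1 / γ) * (log (1 / c) - 1)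
      ≤ (1 + c) * T - c * (exp (γ * T) - 1) / γ := by
        have hgap : (1 + c) * T - c * (1 / c - 1) / γ - 1 / γ * (log (1 / c) - 1) =
            c * (log (1 / c) + 1) / γ := by
          simp only [T]; field_simp; ring
        rw [hexpT]
        linarith [show 0 ≤ c * (log (1 / c) + 1) / γ by positivity]
    _ = ∫ t in (0:ℝ)..T, (1 - c * (exp (γ * t) - 1)) :=
        (integral_one_sub_mul_exp_sub_one hγ.ne' c T).symm
    _ ≤ ∫ t in (0:ℝ)..T, exp (-c * (exp (γ * t) - 1)) :=
        intervalIntegral.integral_mono_on hT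
          (Continuous.intervalIntegrable (by fun_prop) 0 T)
          ((intervalIntegrable_iff_integrableOn_Ioc_of_le hT).mpr
            (hf.mono_set Ioc_subset_Ioi_self))
          fun t _ => by linarith [add_one_le_exp (-c * (exp (γ * t) - 1))]
    _ ≤ ∫ t in Ioi (0:ℝ), exp (-c * (exp (γ * t) - 1)) := by
        rw [intervalIntegral.integral_of_le hT]
        exact setIntegral_mono_set hf (Filter.Eventually.of_forall fun t => (exp_pos _).le)
          (Filter.Eventually.of_forall Ioc_subset_Ioi_self)
end
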